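/- Let N be a normal network on X, and let a and b be distinct elements of X such that {a, b} is either a cherry or a reticulated cherry of N in which b is the reticulation leaf. Let N' be the normal network obtained from N by deleting b. If R and Q are the sets of triples and quads displayed by N, respectively, then the set of triples displayed by N' is {xy|z ∈ R : b ∉ {x, y, z}} and the set of quads displayed by N' is {(w, x, y, z) ∈ Q : b ∉ {w, x, y, z}}. -/

import Mathlib

/-- A (raw) phylogenetic network structure: a vertex type, an arc relation
(arcs are directed; since `arc` is a relation there are no parallel arcs),
and a labelling of the (potential) leaves by elements of `α`. -/
structure PhyloNet (α : Type) : Type 1 where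
  V : Type
  arc : V → V → Prop
  leafMap : α → V

namespace PhyloNet

variable {α : Type}

/-- In-degree of a vertex. -/
noncomputable def inDeg (N : PhyloNet α) (v : N.V) : ℕ := {u : N.V | N.arc u v}.ncard

/-- Out-degree of a vertex. -/
noncomputable def outDeg (N : PhyloNet α) (v : N.V) : ℕ := {u : N.V | N.arc v u}.ncard

/-- A leaf is a vertex of out-degree zero. -/
def IsLeaf (N : PhyloNet α) (v : N.V) : Prop := N.outDeg v = 0

/-- A reticulation is a vertex of in-degree two. -/
def IsRet (N : PhyloNet α) (v : N.V) : Prop := N.inDeg v = 2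

/-- A tree vertex has in-degree one and out-degree two. -/
def IsTreeVert (N : PhyloNet α) (v : N.V) : Prop := N.inDeg v = 1 ∧ N.outDeg v = 2

/-- A root: in-degree zero and every vertex is reachable from it. -/
def IsRoot (N : PhyloNet α) (r : N.V) : Prop :=
  N.inDeg r = 0 ∧ ∀ v : N.V, Relation.ReflTransGen N.arc r v

/-- `N` is a rooted binary phylogenetic network on the (nonempty, finite) leaf set `X`. -/
structure IsNetworkOn (N : PhyloNet α) (X : Finset α) : Prop where
  nonemptyX : X.Nonempty
  finiteV : Finite N.V
  acyclic : ∀ v : N.V, ¬ Relation.TransGen N.arc v v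
  rooted : ∃ r : N.V, N.IsRoot r
  leaf_isLeaf : ∀ x ∈ X, N.IsLeaf (N.leafMap x)
  leaf_inj : ∀ x ∈ X, ∀ y ∈ X, N.leafMap x = N.leafMap y → x = y
  leaf_surj : ∀ v : N.V, N.IsLeaf v → ∃ x ∈ X, N.leafMap x = v
  degrees : (X.card = 1 ∧ Subsingleton N.V) ∨
    (∀ v : N.V,
      (N.inDeg v = 0 ∧ N.outDeg v = 2) ∨ (N.inDeg v = 1 ∧ N.outDeg v = 0) ∨
      (N.inDeg v = 1 ∧ N.outDeg v = 2) ∨ (N.inDeg v = 2 ∧ N.outDeg v = 1))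

/-- A phylogenetic tree is a phylogenetic network with no reticulations. -/
def IsTree (N : PhyloNet α) : Prop := ∀ v : N.V, ¬ N.IsRet v

/-- Tree-child: every non-leaf vertex has a child that is not a reticulation
(i.e. a child that is a tree vertex or a leaf). -/
def TreeChild (N : PhyloNet α) : Prop :=
  ∀ v : N.V, ¬ N.IsLeaf v → ∃ w : N.V, N.arc v w ∧ ¬ N.IsRet w

/-- A shortcut: a reticulation arc `(u, v)` such that there is a directed path
from `u` to `v` avoiding the arc `(u, v)`. -/
def Shortcut (N : PhyloNet α) (u v : N.V) : Prop :=
  N.arc u v ∧ N.IsRet v ∧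
    Relation.TransGen (fun p q => N.arc p q ∧ ¬(p = u ∧ q = v)) u v

/-- Normal: tree-child with no shortcuts. -/
def Normal (N : PhyloNet α) : Prop := N.TreeChild ∧ ∀ u v : N.V, ¬ N.Shortcut u v

/-- Temporal: there is a time map, with positive values, that is constant on
reticulation arcs and strictly increasing on tree arcs. -/
def Temporal (N : PhyloNet α) : Prop :=
  ∃ t : N.V → ℝ, (∀ v : N.V, 0 < t v) ∧
    ∀ u v : N.V, N.arc u v → ((N.IsRet v → t u = t v) ∧ (¬ N.IsRet v → t u < t v))

/-- A system of directed paths in `N` with prescribed endpoints, pairwise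
internally vertex-disjoint (two different paths meet only in common endpoints). -/
def PathSys (N : PhyloNet α) (es : List (N.V × N.V)) : Prop :=
  ∃ P : N.V × N.V → List N.V,
    (∀ e ∈ es, (P e).Chain' N.arc ∧ (P e).head? = some e.1 ∧ (P e).getLast? = some e.2) ∧
    (∀ e ∈ es, ∀ e' ∈ es, e ≠ e' → ∀ w ∈ P e, w ∈ P e' →
      (w = e.1 ∨ w = e.2) ∧ (w = e'.1 ∨ w = e'.2))

/-- `N` displays the triple `xy|z`: a subdivision of the caterpillar `(x, y, z)`
is a subgraph of `N`. -/
def DisplaysTriple (N : PhyloNet α) (X : Finset α) (x y z : α) : Prop :=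
  x ∈ X ∧ y ∈ X ∧ z ∈ X ∧ x ≠ y ∧ x ≠ z ∧ y ≠ z ∧
  ∃ r v : N.V, ([r, v, N.leafMap x, N.leafMap y, N.leafMap z]).Pairwise (· ≠ ·) ∧
    N.PathSys [(r, v), (v, N.leafMap x), (v, N.leafMap y), (r, N.leafMap z)]

/-- `N` displays the quad (caterpillar) `(x₁, x₂, x₃, x₄)`: a subdivision of the
caterpillar on four leaves is a subgraph of `N`. -/
def DisplaysQuad (N : PhyloNet α) (X : Finset α) (x₁ x₂ x₃ x₄ : α) : Prop :=
  x₁ ∈ X ∧ x₂ ∈ X ∧ x₃ ∈ X ∧ x₄ ∈ X ∧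
  x₁ ≠ x₂ ∧ x₁ ≠ x₃ ∧ x₁ ≠ x₄ ∧ x₂ ≠ x₃ ∧ x₂ ≠ x₄ ∧ x₃ ≠ x₄ ∧
  ∃ r q p : N.V,
    ([r, q, p, N.leafMap x₁, N.leafMap x₂, N.leafMap x₃, N.leafMap x₄]).Pairwise (· ≠ ·) ∧
    N.PathSys [(r, q), (q, p), (p, N.leafMap x₁), (p, N.leafMap x₂),
               (q, N.leafMap x₃), (r, N.leafMap x₄)]

/-- `N` displays the phylogenetic tree `T` with leaf set `X'`: a subdivision of
`T` is a subgraph of `N`, with the leaves labelled consistently. -/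
def Displays (N T : PhyloNet α) (X' : Finset α) : Prop :=
  ∃ (f : T.V → N.V) (P : T.V → T.V → List N.V),
    Function.Injective f ∧
    (∀ x ∈ X', f (T.leafMap x) = N.leafMap x) ∧
    (∀ u v : T.V, T.arc u v →
      (P u v).Chain' N.arc ∧ (P u v).head? = some (f u) ∧ (P u v).getLast? = some (f v)) ∧
    (∀ u v u' v' : T.V, T.arc u v → T.arc u' v' → (u, v) ≠ (u', v') →
      ∀ w : N.V, w ∈ P u v → w ∈ P u' v' →
        (w = f u ∨ w = f v) ∧ (w = f u' ∨ w = f v')) ∧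
    (∀ u v w : T.V, T.arc u v → f w ∈ P u v → w = u ∨ w = v)

/-- Isomorphism of two phylogenetic networks on `X`: an arc-preserving bijection
of the vertex sets fixing every leaf label in `X`. -/
def Isom (N N' : PhyloNet α) (X : Finset α) : Prop :=
  ∃ φ : N.V ≃ N'.V, (∀ x ∈ X, φ (N.leafMap x) = N'.leafMap x) ∧
    ∀ u v : N.V, N.arc u v ↔ N'.arc (φ u) (φ v)

/-- `{a, b}` is a cherry: the leaves `a` and `b` have the same parent. -/
def Cherry (N : PhyloNet α) (a b : α) : Prop :=
  a ≠ b ∧ ∃ p : N.V, N.arc p (N.leafMap a) ∧ N.arc p (N.leafMap b)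

/-- `{a, b}` is a reticulated cherry with reticulation leaf `b`:
the parent of `b` is a reticulation and there is an arc from the parent of `a`
to the parent of `b`. -/
def RetCherry (N : PhyloNet α) (a b : α) : Prop :=
  a ≠ b ∧ ∃ pa pb : N.V, N.arc pa (N.leafMap a) ∧ N.arc pb (N.leafMap b) ∧
    N.IsRet pb ∧ N.arc pa pb

/-- `{a, b, c}` is a double-reticulated cherry with reticulation leaf `b`. -/
def DoubleRetCherry (N : PhyloNet α) (a b c : α) : Prop :=
  a ≠ b ∧ b ≠ c ∧ a ≠ c ∧
  ∃ pa pb pc : N.V, N.arc pa (N.leafMap a) ∧ N.arc pb (N.leafMap b) ∧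
    N.arc pc (N.leafMap c) ∧ N.IsRet pb ∧ N.arc pa pb ∧ N.arc pc pb

/-- There is a directed path from `a` to `b` that avoids the vertex `u` entirely. -/
def AvoidReach (N : PhyloNet α) (u a b : N.V) : Prop :=
  a ≠ u ∧ b ≠ u ∧ Relation.ReflTransGen (fun p q => N.arc p q ∧ p ≠ u ∧ q ≠ u) a b

/-- The visibility set of a vertex `u`: the leaves `x ∈ X` such that every
directed path from the root to `x` traverses `u`. -/
def visSet (N : PhyloNet α) (X : Finset α) (u : N.V) : Set α :=
  {x | x ∈ X ∧ ∀ r : N.V, N.IsRoot r → ¬ N.AvoidReach u r (N.leafMap x)}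

/-- The cluster set of a vertex `u`: the leaves `x ∈ X` reachable from `u`. -/
def clusterSet (N : PhyloNet α) (X : Finset α) (u : N.V) : Set α :=
  {x | x ∈ X ∧ Relation.ReflTransGen N.arc u (N.leafMap x)}

/-- A tree path from `u` to `v`: a directed path in which every vertex except
`v` (and possibly `u`) is a tree vertex. -/
def TreePathTo (N : PhyloNet α) (u v : N.V) : Prop :=
  ∃ l : List N.V, l.Chain' N.arc ∧ l.head? = some u ∧ l.getLast? = some v ∧
    ∀ w ∈ l, w ≠ u → w ≠ v → N.IsTreeVert w

/-- A candidate set for `b` (relative to `a`). -/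
def CandidateSet (N : PhyloNet α) (X : Finset α) (a b : α) (W : Set α) : Prop :=
  W.Nonempty ∧ W ⊆ (↑X : Set α) \ {a, b} ∧
  (∀ c ∈ W, ∀ x ∈ X, x ∉ W → x ≠ b →
    N.DisplaysTriple X b c x ∧ ¬ N.DisplaysTriple X a c b) ∧
  (∀ c ∈ W, ∀ c' ∈ W, c ≠ c' → ¬ N.DisplaysTriple X b c c') ∧
  (∀ c ∈ W, ∀ x ∈ X, x ∉ W → x ≠ a → x ≠ b → ¬ N.DisplaysQuad X x b c a)

/-- `N'` is obtained from `N` by deleting the leaf `b` of the cherry `{a, b}`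
(with common parent `p`): delete `b` and its incident arc, and suppress `p`. -/
def DelCherry (N N' : PhyloNet α) (X : Finset α) (a b : α) : Prop :=
  ∃ (p : N.V) (j : N'.V → N.V),
    N.arc p (N.leafMap a) ∧ N.arc p (N.leafMap b) ∧
    Function.Injective j ∧
    (∀ x ∈ X, x ≠ b → j (N'.leafMap x) = N.leafMap x) ∧
    (∀ v : N.V, v ≠ p → v ≠ N.leafMap b → ∃ w : N'.V, j w = v) ∧
    (∀ w : N'.V, j w ≠ p ∧ j w ≠ N.leafMap b) ∧
    (∀ u v : N'.V, N'.arc u v ↔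
      (N.arc (j u) (j v) ∨ (N.arc (j u) p ∧ N.arc p (j v))))

/-- `N'` is obtained from `N` by deleting the reticulation leaf `b` of the
reticulated cherry `{a, b}`: delete `b`, its parent `pb` and their incident
arcs, and suppress the parent `pa` of `a` and the other parent `gb` of `pb`. -/
def DelRetCherry (N N' : PhyloNet α) (X : Finset α) (a b : α) : Prop :=
  ∃ (pa pb gb : N.V) (j : N'.V → N.V),
    N.arc pa (N.leafMap a) ∧ N.arc pb (N.leafMap b) ∧ N.IsRet pb ∧
    N.arc pa pb ∧ N.arc gb pb ∧ gb ≠ pa ∧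
    Function.Injective j ∧
    (∀ x ∈ X, x ≠ b → j (N'.leafMap x) = N.leafMap x) ∧
    (∀ v : N.V, v ∉ ({pa, pb, gb, N.leafMap b} : Set N.V) → ∃ w : N'.V, j w = v) ∧
    (∀ w : N'.V, j w ∉ ({pa, pb, gb, N.leafMap b} : Set N.V)) ∧
    (∀ u v : N'.V, N'.arc u v ↔
      (N.arc (j u) (j v) ∨ (N.arc (j u) pa ∧ N.arc pa (j v)) ∨
       (N.arc (j u) gb ∧ N.arc gb (j v))))

/-- `N'` is obtained from `N` by deleting the reticulation leaf `b` of the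
double-reticulated cherry `{a, b, c}`: delete `b`, `pb` and their incident
arcs, and suppress `pa` and `pc`. -/
def DelDoubleRetCherry (N N' : PhyloNet α) (X : Finset α) (a b c : α) : Prop :=
  ∃ (pa pb pc : N.V) (j : N'.V → N.V),
    N.arc pa (N.leafMap a) ∧ N.arc pb (N.leafMap b) ∧ N.arc pc (N.leafMap c) ∧
    N.IsRet pb ∧ N.arc pa pb ∧ N.arc pc pb ∧
    Function.Injective j ∧
    (∀ x ∈ X, x ≠ b → j (N'.leafMap x) = N.leafMap x) ∧
    (∀ v : N.V, v ∉ ({pa, pb, pc, N.leafMap b} : Set N.V) → ∃ w : N'.V, j w = v) ∧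
    (∀ w : N'.V, j w ∉ ({pa, pb, pc, N.leafMap b} : Set N.V)) ∧
    (∀ u v : N'.V, N'.arc u v ↔
      (N.arc (j u) (j v) ∨ (N.arc (j u) pa ∧ N.arc pa (j v)) ∨
       (N.arc (j u) pc ∧ N.arc pc (j v))))

end PhyloNet

/-!
In both cases `N'` arises from `N` by deleting a set of vertices closed under taking children
(`b`, and `p_b` in the reticulated case) and suppressing vertices that have a unique parent and a
unique surviving child (`p_a`, and `g_b` in the reticulated case: normality makes `g_b` a tree
vertex and rules out the arc `(g_b, p_a)`, which would turn `(g_b, p_b)` into a shortcut).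
Subdivided caterpillars then transfer in both directions. A path system of `N'` lifts to `N` by
reinserting the suppressed vertices. Conversely, a path system of `N` ending in leaves other than
`b` avoids the deleted vertices, its branching vertices are not suppressed (a suppressed vertex
has only one surviving child), and dropping the suppressed vertices yields a path system of `N'`.
-/

namespace List

variable {β γ : Type*} {R : β → β → Prop} {l : List β} {a : β}

theorem IsChain.reflTransGen_of_head?_eq (hl : l.IsChain R) (ha : l.head? = some a) {x : β}
    (hx : x ∈ l) : Relation.ReflTransGen R a x :=
  hl.induction _ _ (fun _ _ hr h => h.tail hr)
    (fun hne => by rw [head?_eq_some_head hne, Option.some_inj] at ha; exact ha ▸ .refl) x hx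

theorem IsChain.reflTransGen_of_getLast?_eq (hl : l.IsChain R) (ha : l.getLast? = some a) {x : β}
    (hx : x ∈ l) : Relation.ReflTransGen R x a :=
  hl.backwards_induction (Relation.ReflTransGen R · a) _ (fun _ _ hr h => h.head hr)
    (fun hne => by rw [getLast?_eq_some_getLast hne, Option.some_inj] at ha; exact ha ▸ .refl) x hx

theorem IsChain.eq_of_isInfix (hR : ∀ x, ¬ Relation.TransGen R x x) (hl : l.IsChain R)
    (ha : l.head? = some a) {b u v : β} (huv : [u, v] <:+: l) (hu : u = a ∨ u = b)
    (hv : v = a ∨ v = b) : u = a ∧ v = b := by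
  have hr : R u v := isChain_pair.1 (hl.infix huv)
  have hav : Relation.TransGen R a v :=
    .tail' (hl.reflTransGen_of_head?_eq ha (huv.subset (by simp))) hr
  have hvb : v = b := hv.resolve_left fun h => hR a (h ▸ hav)
  exact ⟨hu.resolve_right fun h => hR u (.single (h.trans hvb.symm ▸ hr)), hvb⟩

theorem head?_filterMap_of_head?_eq {f : β → Option γ} {b : γ} (ha : l.head? = some a)
    (hb : f a = some b) : (l.filterMap f).head? = some b := by
  cases l with
  | nil => simp at ha
  | cons x t => simp_all

theorem getLast?_filterMap_of_getLast?_eq {f : β → Option γ} {b : γ} (ha : l.getLast? = some a)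
    (hb : f a = some b) : (l.filterMap f).getLast? = some b := by
  rw [← head?_reverse, ← filterMap_reverse]
  exact head?_filterMap_of_head?_eq (by rwa [head?_reverse]) hb

theorem IsChain.filterMap {S : γ → γ → Prop} (f : β → Option γ)
    (hstep : ∀ x y x' y', R x y → f x = some x' → f y = some y' → S x' y')
    (hskip : ∀ x s y x' y', R x s → R s y → f s = none → f x = some x' → f y = some y' →
      S x' y')
    (hnone : ∀ x y, R x y → f x = none → f y ≠ none) :
    ∀ {l : List β}, l.IsChain R → (l.filterMap f).IsChain S
  | [], _ => by simp
  | [x], _ => by cases hx : f x <;> simp [hx]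
  | x :: y :: t, hl => by
    rw [isChain_cons_cons] at hl
    obtain ⟨hxy, hl⟩ := hl
    have ih := IsChain.filterMap f hstep hskip hnone hl
    cases hx : f x with
    | none => simpa [hx] using ih
    | some x' =>
      cases hy : f y with
      | some y' =>
        rw [filterMap_cons_some hx, filterMap_cons_some hy]
        rw [filterMap_cons_some hy] at ih
        exact ih.cons_cons (hstep x y x' y' hxy hx hy)
      | none =>
        cases t with
        | nil => simp [hx, hy]
        | cons z t =>
          rw [isChain_cons_cons] at hl
          obtain ⟨z', hz⟩ := Option.ne_none_iff_exists'.1 (hnone y z hl.1 hy)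
          have ih' := IsChain.filterMap f hstep hskip hnone hl.2
          rw [filterMap_cons_some hz] at ih'
          rw [filterMap_cons_some hx, filterMap_cons_none hy, filterMap_cons_some hz]
          exact ih'.cons_cons (hskip x y z x' z' hxy hl.1 hy hx hz)

end List

namespace PhyloNet

variable {α : Type} {N N' : PhyloNet α}

def IsBinary (N : PhyloNet α) : Prop :=
  ∀ v : N.V,
    (N.inDeg v = 0 ∧ N.outDeg v = 2) ∨ (N.inDeg v = 1 ∧ N.outDeg v = 0) ∨
    (N.inDeg v = 1 ∧ N.outDeg v = 2) ∨ (N.inDeg v = 2 ∧ N.outDeg v = 1)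

theorem IsNetworkOn.isBinary {X : Finset α} (hN : N.IsNetworkOn X) {a b : α} (ha : a ∈ X)
    (hb : b ∈ X) (hab : a ≠ b) : N.IsBinary :=
  hN.degrees.resolve_left fun ⟨_, _⟩ => hab (hN.leaf_inj a ha b hb (Subsingleton.elim _ _))

theorem IsBinary.outDeg_le_two (hN : N.IsBinary) (v : N.V) : N.outDeg v ≤ 2 := by
  rcases hN v with h | h | h | h <;> omega

theorem IsBinary.outDeg_le_one_of_isRet (hN : N.IsBinary) {v : N.V} (hv : N.IsRet v) :
    N.outDeg v ≤ 1 := by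
  rcases hN v with h | h | h | h <;> simp_all [IsRet]

section Degrees

variable [Finite N.V] {u u' v w w₁ w₂ : N.V}

theorem not_arc_of_isLeaf (hv : N.IsLeaf v) : ¬ N.arc v w := fun h => by
  rw [IsLeaf, outDeg, Set.ncard_eq_zero] at hv
  exact hv.subset h

theorem eq_of_arc_of_inDeg_le_one (hv : N.inDeg v ≤ 1) (hu : N.arc u v) (hu' : N.arc u' v) :
    u = u' :=
  (Set.ncard_le_one).1 hv u hu u' hu'

theorem eq_of_arc_of_outDeg_le_one (hv : N.outDeg v ≤ 1) (hw₁ : N.arc v w₁) (hw₂ : N.arc v w₂) :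
    w₁ = w₂ :=
  (Set.ncard_le_one).1 hv w₁ hw₁ w₂ hw₂

theorem two_le_outDeg (hw₁ : N.arc v w₁) (hw₂ : N.arc v w₂) (hne : w₁ ≠ w₂) : 2 ≤ N.outDeg v :=
  (Set.one_lt_ncard_iff).2 ⟨w₁, w₂, hw₁, hw₂, hne⟩

theorem eq_or_eq_of_outDeg_le_two (hv : N.outDeg v ≤ 2) (hw₁ : N.arc v w₁) (hw₂ : N.arc v w₂)
    (hne : w₁ ≠ w₂) (hw : N.arc v w) : w = w₁ ∨ w = w₂ := by
  by_contra! h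
  exact hv.not_gt ((Set.two_lt_ncard_iff).2 ⟨w₁, w₂, w, hw₁, hw₂, hw, hne, h.1.symm, h.2.symm⟩)

theorem IsBinary.inDeg_le_one_of_arc_of_arc (hN : N.IsBinary) (hw₁ : N.arc v w₁)
    (hw₂ : N.arc v w₂) (hne : w₁ ≠ w₂) : N.inDeg v ≤ 1 := by
  have := two_le_outDeg hw₁ hw₂ hne
  rcases hN v with h | h | h | h <;> omega

end Degrees

theorem ne_of_arc (hacyc : ∀ v : N.V, ¬ Relation.TransGen N.arc v v) {u v : N.V}
    (h : N.arc u v) : u ≠ v := by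
  rintro rfl
  exact hacyc u (.single h)

theorem Normal.not_arc_of_isRet (hnorm : N.Normal)
    (hacyc : ∀ v : N.V, ¬ Relation.TransGen N.arc v v) {u u' v : N.V} (hv : N.IsRet v)
    (hu : N.arc u v) (hu' : N.arc u' v) (hne : u ≠ u') : ¬ N.arc u u' := fun h =>
  hnorm.2 u v ⟨hu, hv,
    .tail (.single ⟨h, fun e => ne_of_arc hacyc hu' e.2⟩) ⟨hu', fun e => hne e.1.symm⟩⟩

end PhyloNet

namespace PhyloNet

variable {α : Type} {N N' : PhyloNet α}

/-- `N'` arises from `N` by deleting the vertices of `deleted` and suppressing those of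
`suppressed`; `emb` identifies `N'` with the surviving vertices of `N`. -/
structure DeleteSuppress (N N' : PhyloNet α) where
  emb : N'.V → N.V
  suppressed : Set N.V
  deleted : Set N.V
  emb_injective : Function.Injective emb
  range_emb : Set.range emb = (suppressed ∪ deleted)ᶜ
  arc_iff : ∀ u v, N'.arc u v ↔
    N.arc (emb u) (emb v) ∨ ∃ s ∈ suppressed, N.arc (emb u) s ∧ N.arc s (emb v)
  deleted_closed : ∀ d ∈ deleted, ∀ v, N.arc d v → v ∈ deleted
  not_arc_suppressed : ∀ s ∈ suppressed, ∀ s' ∈ suppressed, ¬ N.arc s s'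
  parent_unique : ∀ s ∈ suppressed, ∀ u u', N.arc u s → N.arc u' s → u = u'
  child_unique : ∀ s ∈ suppressed, ∀ v v', N.arc s v → N.arc s v' → v ∉ deleted →
    v' ∉ deleted → v = v'

namespace DeleteSuppress

variable (c : DeleteSuppress N N')

theorem mem_range_emb_iff {v : N.V} :
    v ∈ Set.range c.emb ↔ v ∉ c.suppressed ∧ v ∉ c.deleted := by
  simp [c.range_emb]

theorem emb_notMem_suppressed (w : N'.V) : c.emb w ∉ c.suppressed :=
  ((c.mem_range_emb_iff).1 ⟨w, rfl⟩).1

theorem emb_notMem_deleted (w : N'.V) : c.emb w ∉ c.deleted :=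
  ((c.mem_range_emb_iff).1 ⟨w, rfl⟩).2

theorem notMem_deleted_of_reflTransGen {u v : N.V} (h : Relation.ReflTransGen N.arc u v)
    (hv : v ∉ c.deleted) : u ∉ c.deleted := by
  induction h using Relation.ReflTransGen.head_induction_on with
  | refl => exact hv
  | head hxy _ ih => exact fun hx => ih (c.deleted_closed _ hx _ hxy)

theorem notMem_deleted_of_isChain {l : List N.V} {t x : N.V} (hl : l.IsChain N.arc)
    (ht : l.getLast? = some t) (htd : t ∉ c.deleted) (hx : x ∈ l) : x ∉ c.deleted :=
  c.notMem_deleted_of_reflTransGen (hl.reflTransGen_of_getLast?_eq ht hx) htd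

theorem transGen_emb {u v : N'.V} (h : Relation.TransGen N'.arc u v) :
    Relation.TransGen N.arc (c.emb u) (c.emb v) :=
  h.lift' c.emb fun u v huv => by
    rcases (c.arc_iff u v).1 huv with h | ⟨s, -, hus, hsv⟩
    · exact .single h
    · exact .tail (.single hus) hsv

theorem acyclic (c : DeleteSuppress N N') (hacyc : ∀ v : N.V, ¬ Relation.TransGen N.arc v v)
    (v : N'.V) : ¬ Relation.TransGen N'.arc v v :=
  fun h => hacyc _ (c.transGen_emb h)

open Classical in
/-- The suppressed vertex (if any) through which an arc of `N'` runs in `N`. -/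
noncomputable def mid (u v : N'.V) : List N.V :=
  if h : ∃ s ∈ c.suppressed, N.arc (c.emb u) s ∧ N.arc s (c.emb v) then [h.choose] else []

theorem mem_mid {u v : N'.V} {s : N.V} (hs : s ∈ c.mid u v) :
    s ∈ c.suppressed ∧ N.arc (c.emb u) s ∧ N.arc s (c.emb v) := by
  unfold mid at hs
  split_ifs at hs with h
  · exact List.mem_singleton.1 hs ▸ h.choose_spec
  · simp at hs

theorem isChain_mid {u v : N'.V} (h : N'.arc u v) :
    (c.emb u :: (c.mid u v ++ [c.emb v])).IsChain N.arc := by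
  unfold mid
  split_ifs with hs
  · exact .cons_cons hs.choose_spec.2.1 (.cons_cons hs.choose_spec.2.2 (.singleton _))
  · exact .cons_cons (((c.arc_iff u v).1 h).resolve_right hs) (.singleton _)

noncomputable def lift : List N'.V → List N.V
  | [] => []
  | [u] => [c.emb u]
  | u :: v :: t => c.emb u :: (c.mid u v ++ lift (v :: t))

theorem head?_lift : ∀ l : List N'.V, (c.lift l).head? = l.head?.map c.emb
  | [] | [_] | _ :: _ :: _ => by simp [lift]

theorem getLast?_lift : ∀ l : List N'.V, (c.lift l).getLast? = l.getLast?.map c.emb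
  | [] | [_] => by simp [lift]
  | u :: v :: t => by
    rw [lift, ← List.cons_append, List.getLast?_append, getLast?_lift (v :: t),
      List.getLast?_cons_cons]
    cases h : (v :: t).getLast? <;> simp_all

theorem isChain_lift : ∀ {l : List N'.V}, l.IsChain N'.arc → (c.lift l).IsChain N.arc
  | [], _ | [_], _ => by simp [lift]
  | u :: v :: t, hl => by
    rw [List.isChain_cons_cons] at hl
    have hmid := c.isChain_mid hl.1
    rw [← List.cons_append, List.isChain_append] at hmid
    rw [lift, ← List.cons_append, List.isChain_append]
    refine ⟨hmid.1, isChain_lift hl.2, fun x hx y hy => ?_⟩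
    rw [head?_lift, List.head?_cons, Option.map_some, Option.mem_some_iff] at hy
    exact hy ▸ hmid.2.2 x hx _ rfl

theorem mem_lift : ∀ {l : List N'.V} {w : N.V}, w ∈ c.lift l →
    (∃ u ∈ l, c.emb u = w) ∨ ∃ u v, [u, v] <:+: l ∧ w ∈ c.mid u v
  | [], _, h => by simp [lift] at h
  | [u], _, h => .inl ⟨u, by simp, by simpa [lift, eq_comm] using h⟩
  | u :: v :: t, w, h => by
    rw [lift, List.mem_cons, List.mem_append] at h
    rcases h with rfl | h | h
    · exact .inl ⟨u, by simp, rfl⟩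
    · exact .inr ⟨u, v, ⟨[], t, rfl⟩, h⟩
    · rcases mem_lift h with ⟨u', hu', hw⟩ | ⟨u', v', huv, hw⟩
      · exact .inl ⟨u', List.mem_cons_of_mem _ hu', hw⟩
      · exact .inr ⟨u', v', List.infix_cons huv, hw⟩

/-- A suppressed vertex shared by two lifts would come from an arc of `N'` common to both paths,
which acyclicity forbids for two different paths. -/
theorem mem_ends_of_mem_lift (hacyc : ∀ v : N.V, ¬ Relation.TransGen N.arc v v)
    {l l' : List N'.V} {a b a' b' : N'.V} (hl : l.IsChain N'.arc) (ha : l.head? = some a)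
    (hl' : l'.IsChain N'.arc) (ha' : l'.head? = some a') (hne : (a, b) ≠ (a', b'))
    (hdisj : ∀ w ∈ l, w ∈ l' → (w = a ∨ w = b) ∧ (w = a' ∨ w = b')) {w : N.V}
    (hw : w ∈ c.lift l) (hw' : w ∈ c.lift l') :
    (w = c.emb a ∨ w = c.emb b) ∧ (w = c.emb a' ∨ w = c.emb b') := by
  rcases c.mem_lift hw with ⟨u, hu, rfl⟩ | ⟨u, v, huv, hs⟩
  · rcases c.mem_lift hw' with ⟨u', hu', he⟩ | ⟨_, _, _, hs'⟩
    · obtain rfl := c.emb_injective he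
      simpa only [c.emb_injective.eq_iff] using hdisj u' hu hu'
    · exact absurd (c.mem_mid hs').1 (c.emb_notMem_suppressed u)
  · rcases c.mem_lift hw' with ⟨u', -, rfl⟩ | ⟨u', v', huv', hs'⟩
    · exact absurd (c.mem_mid hs).1 (c.emb_notMem_suppressed u')
    · obtain ⟨hsup, hus, hsv⟩ := c.mem_mid hs
      obtain ⟨-, hus', hsv'⟩ := c.mem_mid hs'
      obtain rfl := c.emb_injective (c.parent_unique _ hsup _ _ hus' hus)
      obtain rfl := c.emb_injective (c.child_unique _ hsup _ _ hsv' hsv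
        (c.emb_notMem_deleted _) (c.emb_notMem_deleted _))
      have hu := hdisj u' (huv.subset (by simp)) (huv'.subset (by simp))
      have hv := hdisj v' (huv.subset (by simp)) (huv'.subset (by simp))
      obtain ⟨rfl, rfl⟩ := hl.eq_of_isInfix (c.acyclic hacyc) ha huv hu.1 hv.1
      obtain ⟨rfl, rfl⟩ := hl'.eq_of_isInfix (c.acyclic hacyc) ha' huv' hu.2 hv.2
      exact absurd rfl hne

theorem pathSys_map_of_pathSys (hacyc : ∀ v : N.V, ¬ Relation.TransGen N.arc v v)
    {es : List (N'.V × N'.V)} (h : N'.PathSys es) :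
    N.PathSys (es.map (Prod.map c.emb c.emb)) := by
  obtain ⟨P, hP, hdisj⟩ := h
  have hinj := c.emb_injective.prodMap c.emb_injective
  refine ⟨Function.extend (Prod.map c.emb c.emb) (c.lift ∘ P) fun _ => [], ?_, ?_⟩ <;>
    simp only [List.forall_mem_map, hinj.extend_apply, Function.comp_apply]
  · intro e he
    obtain ⟨hch, hh, hl⟩ := hP e he
    exact ⟨c.isChain_lift hch, by simp [head?_lift, hh], by simp [getLast?_lift, hl]⟩
  · intro e he e' he' hne w hw hw'
    replace hne : e ≠ e' := fun h => hne (h ▸ rfl)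
    exact c.mem_ends_of_mem_lift hacyc (hP e he).1 (hP e he).2.1 (hP e' he').1 (hP e' he').2.1
      (by simpa using hne) (hdisj e he e' he' hne) hw hw'

theorem mem_suppressed_of_partialInv_eq_none {v : N.V} (h : Function.partialInv c.emb v = none)
    (hv : v ∉ c.deleted) : v ∈ c.suppressed := by
  by_contra hs
  obtain ⟨w, rfl⟩ := (c.mem_range_emb_iff).2 ⟨hs, hv⟩
  simp [Function.partialInv_left c.emb_injective] at h

theorem pathSys_of_pathSys_map {es : List (N'.V × N'.V)}
    (h : N.PathSys (es.map (Prod.map c.emb c.emb))) : N'.PathSys es := by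
  obtain ⟨P, hP, hdisj⟩ := h
  simp only [List.forall_mem_map] at hP hdisj
  have hpinv := c.emb_injective.isPartialInv
  refine ⟨fun e => (P (Prod.map c.emb c.emb e)).filterMap (Function.partialInv c.emb),
    fun e he => ?_, fun e he e' he' hne w hw hw' => ?_⟩
  · obtain ⟨hch, hh, hl⟩ := hP e he
    have hdel : ∀ x ∈ P (Prod.map c.emb c.emb e), x ∉ c.deleted := fun _ =>
      c.notMem_deleted_of_isChain hch hl (c.emb_notMem_deleted _)
    refine ⟨?_, List.head?_filterMap_of_head?_eq hh ((hpinv _ _).2 rfl),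
      List.getLast?_filterMap_of_getLast?_eq hl ((hpinv _ _).2 rfl)⟩
    refine (hch.imp_of_mem_imp (S := fun x y => N.arc x y ∧ x ∉ c.deleted ∧ y ∉ c.deleted)
      fun x y hx hy hxy => ⟨hxy, hdel x hx, hdel y hy⟩).filterMap _ ?_ ?_ ?_
    · rintro x y x' y' ⟨hxy, -, -⟩ hx hy
      rw [hpinv] at hx hy
      exact (c.arc_iff _ _).2 (.inl (hx ▸ hy ▸ hxy))
    · rintro x s y x' y' ⟨hxs, -, hs⟩ ⟨hsy, -, -⟩ hsn hx hy
      rw [hpinv] at hx hy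
      exact (c.arc_iff _ _).2
        (.inr ⟨s, c.mem_suppressed_of_partialInv_eq_none hsn hs, hx ▸ hxs, hy ▸ hsy⟩)
    · rintro x y ⟨hxy, hx, hy⟩ hxn hyn
      exact c.not_arc_suppressed _ (c.mem_suppressed_of_partialInv_eq_none hxn hx) _
        (c.mem_suppressed_of_partialInv_eq_none hyn hy) hxy
  · obtain ⟨x, hx, hxw⟩ := List.mem_filterMap.1 hw
    obtain ⟨x', hx', hxw'⟩ := List.mem_filterMap.1 hw'
    rw [hpinv] at hxw hxw'
    subst hxw hxw'
    simpa only [Prod.map_fst, Prod.map_snd, c.emb_injective.eq_iff] using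
      hdisj e he e' he' ((c.emb_injective.prodMap c.emb_injective).ne hne) _ hx hx'

/-- A suppressed vertex has only one surviving child, so two paths leaving it would share it. -/
theorem mem_range_emb_of_branch (hacyc : ∀ v : N.V, ¬ Relation.TransGen N.arc v v)
    {es : List (N.V × N.V)} (h : N.PathSys es) {s t₁ t₂ : N.V} (h₁ : (s, t₁) ∈ es)
    (h₂ : (s, t₂) ∈ es) (hs₁ : s ≠ t₁) (hs₂ : s ≠ t₂) (ht : t₁ ≠ t₂)
    (ht₁ : t₁ ∈ Set.range c.emb) (ht₂ : t₂ ∈ Set.range c.emb) : s ∈ Set.range c.emb := by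
  obtain ⟨P, hP, hdisj⟩ := h
  rw [c.mem_range_emb_iff] at ht₁ ht₂ ⊢
  have hfirst : ∀ t, (s, t) ∈ es → s ≠ t → t ∉ c.deleted →
      s ∉ c.deleted ∧ ∃ y ∈ P (s, t), N.arc s y ∧ y ∉ c.deleted := by
    intro t hmem hst htd
    obtain ⟨hch, hh, hl⟩ := hP _ hmem
    obtain ⟨y, rest, hPs⟩ : ∃ y rest, P (s, t) = s :: y :: rest := by
      rcases hPst : P (s, t) with _ | ⟨x, _ | ⟨y, rest⟩⟩
      · simp [hPst] at hh
      · simp only [hPst, List.head?_cons, List.getLast?_singleton, Option.some_inj] at hh hl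
        exact absurd (hh.symm.trans hl) hst
      · simp only [hPst, List.head?_cons, Option.some_inj] at hh
        exact ⟨y, rest, hh ▸ rfl⟩
    rw [hPs] at hch hl ⊢
    have hdel := fun x (hx : x ∈ s :: y :: rest) => c.notMem_deleted_of_isChain hch hl htd hx
    exact ⟨hdel s (by simp), y, by simp, (List.isChain_cons_cons.1 hch).1, hdel y (by simp)⟩
  obtain ⟨hsd, y₁, hy₁, hsy₁, hy₁d⟩ := hfirst t₁ h₁ hs₁ ht₁.2
  obtain ⟨-, y₂, hy₂, hsy₂, hy₂d⟩ := hfirst t₂ h₂ hs₂ ht₂.2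
  refine ⟨fun hsup => ht ?_, hsd⟩
  obtain rfl := c.child_unique s hsup _ _ hsy₁ hsy₂ hy₁d hy₂d
  have hy := hdisj _ h₁ _ h₂ (by simpa using ht) y₁ hy₁ hy₂
  have hys : y₁ ≠ s := (ne_of_arc hacyc hsy₁).symm
  exact (hy.1.resolve_left hys).symm.trans (hy.2.resolve_left hys)

variable [DecidableEq α] {X : Finset α} {b : α}

theorem displaysTriple_iff (hacyc : ∀ v : N.V, ¬ Relation.TransGen N.arc v v)
    (hleaf : ∀ x ∈ X, x ≠ b → c.emb (N'.leafMap x) = N.leafMap x) (x y z : α) :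
    N'.DisplaysTriple (X.erase b) x y z ↔
      N.DisplaysTriple X x y z ∧ b ∉ ({x, y, z} : Set α) := by
  constructor
  · rintro ⟨hx, hy, hz, hxy, hxz, hyz, r, v, hpw, hsys⟩
    rw [Finset.mem_erase] at hx hy hz
    refine ⟨⟨hx.2, hy.2, hz.2, hxy, hxz, hyz, c.emb r, c.emb v, ?_, ?_⟩, ?_⟩
    · simpa [hleaf, hx, hy, hz] using hpw.map c.emb fun _ _ => c.emb_injective.ne
    · simpa [hleaf, hx, hy, hz] using c.pathSys_map_of_pathSys hacyc hsys
    · simp only [Set.mem_insert_iff, Set.mem_singleton_iff, not_or]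
      exact ⟨hx.1.symm, hy.1.symm, hz.1.symm⟩
  · rintro ⟨⟨hx, hy, hz, hxy, hxz, hyz, r, v, hpw, hsys⟩, hb⟩
    simp only [Set.mem_insert_iff, Set.mem_singleton_iff, not_or] at hb
    obtain ⟨hbx, hby, hbz⟩ := hb
    rw [← hleaf x hx (Ne.symm hbx), ← hleaf y hy (Ne.symm hby), ← hleaf z hz (Ne.symm hbz)]
      at hpw hsys
    have hne := hpw
    simp only [List.pairwise_cons, List.mem_cons, List.not_mem_nil, or_false, forall_eq_or_imp,
      forall_eq, IsEmpty.forall_iff, implies_true, List.Pairwise.nil, and_true] at hne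
    obtain ⟨⟨hrv, -, -, hrz⟩, ⟨hvx, hvy, hvz⟩, ⟨hexy, -⟩, -⟩ := hne
    obtain ⟨v, rfl⟩ := c.mem_range_emb_of_branch hacyc hsys (by simp) (by simp) hvx hvy hexy
      ⟨_, rfl⟩ ⟨_, rfl⟩
    obtain ⟨r, rfl⟩ := c.mem_range_emb_of_branch hacyc hsys (by simp) (by simp) hrv hrz hvz
      ⟨_, rfl⟩ ⟨_, rfl⟩
    refine ⟨Finset.mem_erase.2 ⟨Ne.symm hbx, hx⟩, Finset.mem_erase.2 ⟨Ne.symm hby, hy⟩,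
      Finset.mem_erase.2 ⟨Ne.symm hbz, hz⟩, hxy, hxz, hyz, r, v,
      hpw.of_map c.emb fun _ _ h e => h (congrArg _ e), c.pathSys_of_pathSys_map ?_⟩
    simpa using hsys

theorem displaysQuad_iff (hacyc : ∀ v : N.V, ¬ Relation.TransGen N.arc v v)
    (hleaf : ∀ x ∈ X, x ≠ b → c.emb (N'.leafMap x) = N.leafMap x) (x₁ x₂ x₃ x₄ : α) :
    N'.DisplaysQuad (X.erase b) x₁ x₂ x₃ x₄ ↔
      N.DisplaysQuad X x₁ x₂ x₃ x₄ ∧ b ∉ ({x₁, x₂, x₃, x₄} : Set α) := by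
  constructor
  · rintro ⟨h₁, h₂, h₃, h₄, h₁₂, h₁₃, h₁₄, h₂₃, h₂₄, h₃₄, r, q, p, hpw, hsys⟩
    rw [Finset.mem_erase] at h₁ h₂ h₃ h₄
    refine ⟨⟨h₁.2, h₂.2, h₃.2, h₄.2, h₁₂, h₁₃, h₁₄, h₂₃, h₂₄, h₃₄, c.emb r, c.emb q, c.emb p,
      ?_, ?_⟩, ?_⟩
    · simpa [hleaf, h₁, h₂, h₃, h₄] using hpw.map c.emb fun _ _ => c.emb_injective.ne
    · simpa [hleaf, h₁, h₂, h₃, h₄] using c.pathSys_map_of_pathSys hacyc hsys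
    · simp only [Set.mem_insert_iff, Set.mem_singleton_iff, not_or]
      exact ⟨h₁.1.symm, h₂.1.symm, h₃.1.symm, h₄.1.symm⟩
  · rintro ⟨⟨h₁, h₂, h₃, h₄, h₁₂, h₁₃, h₁₄, h₂₃, h₂₄, h₃₄, r, q, p, hpw, hsys⟩, hb⟩
    simp only [Set.mem_insert_iff, Set.mem_singleton_iff, not_or] at hb
    obtain ⟨hb₁, hb₂, hb₃, hb₄⟩ := hb
    rw [← hleaf x₁ h₁ (Ne.symm hb₁), ← hleaf x₂ h₂ (Ne.symm hb₂), ← hleaf x₃ h₃ (Ne.symm hb₃),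
      ← hleaf x₄ h₄ (Ne.symm hb₄)] at hpw hsys
    have hne := hpw
    simp only [List.pairwise_cons, List.mem_cons, List.not_mem_nil, or_false, forall_eq_or_imp,
      forall_eq, IsEmpty.forall_iff, implies_true, List.Pairwise.nil, and_true] at hne
    obtain ⟨⟨hrq, -, -, -, -, hr₄⟩, ⟨hqp, -, -, hq₃, hq₄⟩, ⟨hp₁, hp₂, hp₃, -⟩, ⟨he₁₂, -⟩, -⟩ :=
      hne
    obtain ⟨p, rfl⟩ := c.mem_range_emb_of_branch hacyc hsys (by simp) (by simp) hp₁ hp₂ he₁₂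
      ⟨_, rfl⟩ ⟨_, rfl⟩
    obtain ⟨q, rfl⟩ := c.mem_range_emb_of_branch hacyc hsys (by simp) (by simp) hqp hq₃ hp₃
      ⟨_, rfl⟩ ⟨_, rfl⟩
    obtain ⟨r, rfl⟩ := c.mem_range_emb_of_branch hacyc hsys (by simp) (by simp) hrq hr₄ hq₄
      ⟨_, rfl⟩ ⟨_, rfl⟩
    refine ⟨Finset.mem_erase.2 ⟨Ne.symm hb₁, h₁⟩, Finset.mem_erase.2 ⟨Ne.symm hb₂, h₂⟩,
      Finset.mem_erase.2 ⟨Ne.symm hb₃, h₃⟩, Finset.mem_erase.2 ⟨Ne.symm hb₄, h₄⟩,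
      h₁₂, h₁₃, h₁₄, h₂₃, h₂₄, h₃₄, r, q, p,
      hpw.of_map c.emb fun _ _ h e => h (congrArg _ e), c.pathSys_of_pathSys_map ?_⟩
    simpa using hsys

end DeleteSuppress

variable {X : Finset α} {a b : α}

theorem DelCherry.exists_deleteSuppress (hN : N.IsNetworkOn X) (ha : a ∈ X) (hb : b ∈ X)
    (hab : a ≠ b) (h : N.DelCherry N' X a b) :
    ∃ c : DeleteSuppress N N', ∀ x ∈ X, x ≠ b → c.emb (N'.leafMap x) = N.leafMap x := by
  obtain ⟨p, j, hpa, hpb, hinj, hleaf, hsurj, hnot, harc⟩ := h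
  have := hN.finiteV
  have hab' : N.leafMap a ≠ N.leafMap b := fun h => hab (hN.leaf_inj a ha b hb h)
  have hbin := hN.isBinary ha hb hab
  have hch : ∀ v, N.arc p v → v = N.leafMap a ∨ v = N.leafMap b :=
    fun _ => eq_or_eq_of_outDeg_le_two (hbin.outDeg_le_two p) hpa hpb hab'
  refine ⟨{ emb := j, suppressed := {p}, deleted := {N.leafMap b}, emb_injective := hinj,
            range_emb := ?_, arc_iff := ?_, deleted_closed := ?_, not_arc_suppressed := ?_,
            parent_unique := ?_, child_unique := ?_ }, hleaf⟩
  · ext v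
    simp only [Set.mem_range, Set.singleton_union, Set.mem_compl_iff, Set.mem_insert_iff,
      Set.mem_singleton_iff, not_or]
    exact ⟨fun ⟨w, hw⟩ => hw ▸ hnot w, fun hv => hsurj v hv.1 hv.2⟩
  · intro u v
    simp [harc]
  · rintro _ rfl v hv
    exact absurd hv (not_arc_of_isLeaf (hN.leaf_isLeaf b hb))
  · rintro _ rfl _ rfl hpp
    exact ne_of_arc hN.acyclic hpp rfl
  · rintro _ rfl _ _
    exact eq_of_arc_of_inDeg_le_one (hbin.inDeg_le_one_of_arc_of_arc hpa hpb hab')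
  · rintro _ rfl v v' hv hv' hvb hv'b
    exact ((hch v hv).resolve_right hvb).trans ((hch v' hv').resolve_right hv'b).symm

theorem DelRetCherry.exists_deleteSuppress (hN : N.IsNetworkOn X) (hnorm : N.Normal)
    (ha : a ∈ X) (hb : b ∈ X) (hab : a ≠ b) (h : N.DelRetCherry N' X a b) :
    ∃ c : DeleteSuppress N N', ∀ x ∈ X, x ≠ b → c.emb (N'.leafMap x) = N.leafMap x := by
  obtain ⟨pa, pb, gb, j, hpa, hpb, hret, hpapb, hgbpb, hgbpa_ne, hinj, hleaf, hsurj, hnot, harc⟩ :=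
    h
  have := hN.finiteV
  have hbin := hN.isBinary ha hb hab
  have hacyc := hN.acyclic
  have hlb : ∀ w, ¬ N.arc (N.leafMap b) w := fun _ => not_arc_of_isLeaf (hN.leaf_isLeaf b hb)
  have hpbch : ∀ v, N.arc pb v → v = N.leafMap b :=
    fun _ hv => eq_of_arc_of_outDeg_le_one (hbin.outDeg_le_one_of_isRet hret) hv hpb
  have hapb : N.leafMap a ≠ pb := fun h => not_arc_of_isLeaf (hN.leaf_isLeaf a ha) (h ▸ hpb)
  have hpach : ∀ v, N.arc pa v → v = N.leafMap a ∨ v = pb :=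
    fun _ => eq_or_eq_of_outDeg_le_two (hbin.outDeg_le_two pa) hpa hpapb hapb
  obtain ⟨w, hgbw, hwret⟩ := hnorm.1 gb fun hl => not_arc_of_isLeaf hl hgbpb
  have hpbw : pb ≠ w := fun h => hwret (h ▸ hret)
  have hgbch : ∀ v, N.arc gb v → v = pb ∨ v = w :=
    fun _ => eq_or_eq_of_outDeg_le_two (hbin.outDeg_le_two gb) hgbpb hgbw hpbw
  have hno_gbpa := hnorm.not_arc_of_isRet hacyc hret hgbpb hpapb hgbpa_ne
  have hno_pagb := hnorm.not_arc_of_isRet hacyc hret hpapb hgbpb (Ne.symm hgbpa_ne)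
  refine ⟨{ emb := j, suppressed := {pa, gb}, deleted := {pb, N.leafMap b}, emb_injective := hinj,
            range_emb := ?_, arc_iff := ?_, deleted_closed := ?_, not_arc_suppressed := ?_,
            parent_unique := ?_, child_unique := ?_ }, hleaf⟩
  · ext v
    simp only [Set.mem_range, Set.mem_union, Set.mem_compl_iff, Set.mem_insert_iff,
      Set.mem_singleton_iff, not_or] at hsurj hnot ⊢
    refine ⟨?_, fun hv => hsurj v (by tauto)⟩
    rintro ⟨w, rfl⟩
    have := hnot w
    tauto
  · intro u v
    simp [harc]
  · simp only [Set.mem_insert_iff, Set.mem_singleton_iff]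
    rintro _ (rfl | rfl) v hv
    · exact .inr (hpbch v hv)
    · exact absurd hv (hlb v)
  · simp only [Set.mem_insert_iff, Set.mem_singleton_iff]
    rintro _ (rfl | rfl) _ (rfl | rfl) h
    exacts [ne_of_arc hacyc h rfl, hno_pagb h, hno_gbpa h, ne_of_arc hacyc h rfl]
  · simp only [Set.mem_insert_iff, Set.mem_singleton_iff]
    rintro _ (rfl | rfl) _ _
    exacts [eq_of_arc_of_inDeg_le_one (hbin.inDeg_le_one_of_arc_of_arc hpa hpapb hapb),
      eq_of_arc_of_inDeg_le_one (hbin.inDeg_le_one_of_arc_of_arc hgbpb hgbw hpbw)]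
  · simp only [Set.mem_insert_iff, Set.mem_singleton_iff, not_or]
    rintro _ (rfl | rfl) v v' hv hv' hvd hv'd
    · exact ((hpach v hv).resolve_right hvd.1).trans ((hpach v' hv').resolve_right hv'd.1).symm
    · exact ((hgbch v hv).resolve_left hvd.1).trans ((hgbch v' hv').resolve_left hv'd.1).symm

end PhyloNet

open PhyloNet in
/-- The triples and quads displayed by the network obtained by
deleting `b` are exactly those displayed by `N` that do not involve `b`. -/
theorem deleting_leaf_triples_quads {α : Type} [DecidableEq α] (X : Finset α) (N N' : PhyloNet α)
    (hN : N.IsNetworkOn X) (hnorm : N.Normal)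
    (a b : α) (ha : a ∈ X) (hb : b ∈ X) (hab : a ≠ b)
    (hdel : N.DelCherry N' X a b ∨ N.DelRetCherry N' X a b) :
    (∀ x y z : α, N'.DisplaysTriple (X.erase b) x y z ↔
      (N.DisplaysTriple X x y z ∧ b ∉ ({x, y, z} : Set α))) ∧
    (∀ w x y z : α, N'.DisplaysQuad (X.erase b) w x y z ↔
      (N.DisplaysQuad X w x y z ∧ b ∉ ({w, x, y, z} : Set α))) := by
  obtain ⟨c, hleaf⟩ := hdel.elim (·.exists_deleteSuppress hN ha hb hab)
    (·.exists_deleteSuppress hN hnorm ha hb hab)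
  exact ⟨c.displaysTriple_iff hN.acyclic hleaf, c.displaysQuad_iff hN.acyclic hleaf⟩
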